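/- Let M = {E_m}_{m∈𝒳} be a quantum instrument on a finite-dimensional Hilbert space Q and s = {p(x), ρ_x}_{x∈X} an input ensemble. Then the entropy defect loss of the channelized instrument equals Δχ(s, M) = Σ_m p(m) [χ(s) − χ(s̄_m)] − I(X:𝒳), where I(X:𝒳) is the classical mutual information between input letter and outcome and s̄_m is the conditional output ensemble given outcome m. -/

import Mathlib

/-! Since the channelized output `∑ₘ Eₘ(ρ) ⊗ |m⟩⟨m|` is block diagonal, its entropy is
`∑ₘ S(Eₘ(ρ))`, and the output defect splits over the outcomes as
`χ(M(s)) = ∑ₘ χ({p(x), Eₘ(ρₓ)})`, a sum of defects of subnormalized ensembles. Normalizing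
with `S(c τ) = c S(τ) + η(c) Tr τ` (`η = negMulLog`) turns each of them into
`χ({p(x), Eₘ(ρₓ)}) = p(m) χ(s̄ₘ) + ∑ₓ p(x) p(m|x) log₂ (p(m|x) / p(m))`: the correction terms
`p(m) log p(m)` and `p(x) p(m|x) log p(m|x)` of the two normalizations combine into the
mutual-information summand. Summing over `m` with `∑ₘ p(m) = 1` gives the identity.

`entropy` is defined through `IsHermitian.eigenvalues`, so the spectra of `c • τ` and of block
diagonal matrices are identified through their characteristic polynomials. -/

open Matrix
open scoped BigOperators ComplexOrder Classical

noncomputable section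

namespace QID

variable {Q Q' R A X O B : Type*}

/-- The rank-one projector `|ψ⟩⟨ψ|`. -/
def pureState (ψ : Q → ℂ) : Matrix Q Q ℂ :=
  Matrix.vecMulVec ψ (star ψ)

/-- A density matrix: positive semidefinite with unit trace. -/
def IsDensity [Fintype Q] (ρ : Matrix Q Q ℂ) : Prop :=
  ρ.PosSemidef ∧ ρ.trace = 1

/-- Square root of a positive semidefinite matrix (junk value `0` otherwise). -/
def sqrtPSD [Fintype Q] [DecidableEq Q] (M : Matrix Q Q ℂ) : Matrix Q Q ℂ :=
  if h : M.PosSemidef then h.1.eigenvectorUnitary.1 *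
    Matrix.diagonal ((↑) ∘ Real.sqrt ∘ h.1.eigenvalues) *
    (star h.1.eigenvectorUnitary : Matrix Q Q ℂ) else 0

/-- The trace norm `‖M‖₁ = Tr √(MᴴM)`. -/
def traceNorm [Fintype Q] [DecidableEq Q] (M : Matrix Q Q ℂ) : ℝ :=
  (sqrtPSD (Mᴴ * M)).trace.re

/-- The fidelity `F(ρ,σ) = (Tr|√ρ√σ|)²`. -/
def fidelity [Fintype Q] [DecidableEq Q] (ρ σ : Matrix Q Q ℂ) : ℝ :=
  (traceNorm (sqrtPSD ρ * sqrtPSD σ)) ^ 2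

/-- The von Neumann entropy `S(ρ) = -Tr[ρ log₂ ρ]` (base two), computed through
the eigenvalues of `ρ`; junk value `0` if `ρ` is not Hermitian. -/
def entropy [Fintype Q] [DecidableEq Q] (ρ : Matrix Q Q ℂ) : ℝ :=
  if h : ρ.IsHermitian then (∑ i, Real.negMulLog (h.eigenvalues i)) / Real.log 2 else 0

/-- The entropy defect (Holevo quantity) `χ(s) = S(ρ_s) - ∑ₓ p(x) S(ρₓ)` of an ensemble. -/
def entropyDefect [Fintype Q] [DecidableEq Q] [Fintype X]
    (p : X → ℝ) (ρ : X → Matrix Q Q ℂ) : ℝ :=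
  entropy (∑ x, (p x : ℂ) • ρ x) - ∑ x, p x * entropy (ρ x)

/-- The action of `id_R ⊗ Φ` on a bipartite matrix. -/
def idTensor (Φ : Matrix Q Q ℂ →ₗ[ℂ] Matrix Q' Q' ℂ)
    (M : Matrix (R × Q) (R × Q) ℂ) : Matrix (R × Q') (R × Q') ℂ :=
  fun p q => Φ (Matrix.of fun a b => M (p.1, a) (q.1, b)) p.2 q.2

/-- Complete positivity: every ampliation `id_{Fin k} ⊗ Φ` preserves positive semidefiniteness. -/
def IsCompletelyPositive [Fintype Q] [Fintype Q']
    (Φ : Matrix Q Q ℂ →ₗ[ℂ] Matrix Q' Q' ℂ) : Prop :=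
  ∀ (k : ℕ) (M : Matrix (Fin k × Q) (Fin k × Q) ℂ),
    M.PosSemidef → (idTensor Φ M).PosSemidef

def IsTracePreserving [Fintype Q] [Fintype Q']
    (Φ : Matrix Q Q ℂ →ₗ[ℂ] Matrix Q' Q' ℂ) : Prop :=
  ∀ M : Matrix Q Q ℂ, (Φ M).trace = M.trace

/-- A channel: a completely positive trace-preserving linear map. -/
def IsChannel [Fintype Q] [Fintype Q']
    (Φ : Matrix Q Q ℂ →ₗ[ℂ] Matrix Q' Q' ℂ) : Prop :=
  IsCompletelyPositive Φ ∧ IsTracePreserving Φ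

/-- A quantum instrument: a family of completely positive maps summing up to a
trace-preserving map. -/
def IsInstrument [Fintype Q] [Fintype Q'] [Fintype O]
    (E : O → (Matrix Q Q ℂ →ₗ[ℂ] Matrix Q' Q' ℂ)) : Prop :=
  (∀ m, IsCompletelyPositive (E m)) ∧
    ∀ M : Matrix Q Q ℂ, (∑ m, E m M).trace = M.trace

/-- Partial trace over the first tensor factor. -/
def ptraceL [Fintype R] (M : Matrix (R × Q) (R × Q) ℂ) : Matrix Q Q ℂ :=
  fun a b => ∑ i, M (i, a) (i, b)

/-- Partial trace over the second tensor factor. -/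
def ptraceRt [Fintype Q] (M : Matrix (R × Q) (R × Q) ℂ) : Matrix R R ℂ :=
  fun i j => ∑ a, M (i, a) (j, a)

/-- `Ψ` (a vector on `R × Q`, reference first) purifies the state `ρ` on `Q`. -/
def IsPurification [Fintype R] (ρ : Matrix Q Q ℂ) (Ψ : R × Q → ℂ) : Prop :=
  ptraceL (pureState Ψ) = ρ

/-- The channelized instrument `ρ ↦ ∑ₘ Eₘ(ρ) ⊗ |m⟩⟨m|`, acting `Q → Q' ⊗ 𝒳`. -/
def instrApply [DecidableEq O] (E : O → (Matrix Q Q ℂ →ₗ[ℂ] Matrix Q' Q' ℂ))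
    (ρ : Matrix Q Q ℂ) : Matrix (Q' × O) (Q' × O) ℂ :=
  fun p q => if p.2 = q.2 then E p.2 ρ p.1 q.1 else 0

/-- The action of `id_R ⊗ M` for the channelized instrument `M` on a bipartite matrix. -/
def instrApplyRef [DecidableEq O] (E : O → (Matrix Q Q ℂ →ₗ[ℂ] Matrix Q' Q' ℂ))
    (M : Matrix (R × Q) (R × Q) ℂ) : Matrix (R × Q' × O) (R × Q' × O) ℂ :=
  fun p q => if p.2.2 = q.2.2 then
    E p.2.2 (Matrix.of fun a b => M (p.1, a) (q.1, b)) p.2.1 q.2.1 else 0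

/-- The coherent information `I_c^{R→B}(ρ^{RB}) = S(ρ^B) - S(ρ^{RB})`. -/
def cohInfo [Fintype R] [DecidableEq R] [Fintype B] [DecidableEq B]
    (M : Matrix (R × B) (R × B) ℂ) : ℝ :=
  entropy (ptraceL M) - entropy M

/-- The quantum disturbance `δ(ρ,M) = S(ρ) - I_c^{R→Q'𝒳}((id_R ⊗ M)(Ψ))` of an
instrument, w.r.t. a purification `Ψ` of `ρ`. -/
def qDisturbance [Fintype Q] [DecidableEq Q] [Fintype Q'] [DecidableEq Q']
    [Fintype R] [DecidableEq R] [Fintype O] [DecidableEq O]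
    (ρ : Matrix Q Q ℂ) (E : O → (Matrix Q Q ℂ →ₗ[ℂ] Matrix Q' Q' ℂ))
    (Ψ : R × Q → ℂ) : ℝ :=
  entropy ρ - cohInfo (instrApplyRef E (pureState Ψ))

/-- The quantum disturbance (coherent information loss)
`δ(ρ,E) = S(ρ) - I_c^{R→Q'}((id_R ⊗ E)(Ψ))` of a channel. -/
def qDisturbanceChan [Fintype Q] [DecidableEq Q] [Fintype Q'] [DecidableEq Q']
    [Fintype R] [DecidableEq R]
    (ρ : Matrix Q Q ℂ) (E : Matrix Q Q ℂ →ₗ[ℂ] Matrix Q' Q' ℂ)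
    (Ψ : R × Q → ℂ) : ℝ :=
  entropy ρ - cohInfo (idTensor E (pureState Ψ))

/-- The quantum information gain `ι(ρ,M) = S(ρ^R) - ∑ₘ p(m) S(τ^R_m)`. -/
def qInfoGain [Fintype Q] [DecidableEq Q] [Fintype Q'] [DecidableEq Q']
    [Fintype R] [DecidableEq R] [Fintype O]
    (E : O → (Matrix Q Q ℂ →ₗ[ℂ] Matrix Q' Q' ℂ)) (Ψ : R × Q → ℂ) : ℝ :=
  entropy (ptraceRt (pureState Ψ)) -
    ∑ m, ((E m (ptraceL (pureState Ψ))).trace.re) *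
      entropy ((((E m (ptraceL (pureState Ψ))).trace.re)⁻¹ : ℝ) •
        ptraceRt (idTensor (E m) (pureState Ψ)))

/-- The corrected average output fidelity of an instrument on an ensemble:
`F_av(s,M) = sup over families of correcting channels {R_m} of
∑ₓ p(x) F(∑ₘ R_m(E_m(ρₓ)), ρₓ)`. -/
def avgFid [Fintype Q] [DecidableEq Q] [Fintype Q'] [Fintype X] [Fintype O]
    (p : X → ℝ) (ρ : X → Matrix Q Q ℂ)
    (E : O → (Matrix Q Q ℂ →ₗ[ℂ] Matrix Q' Q' ℂ)) : ℝ :=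
  ⨆ Rf : {Rf : O → (Matrix Q' Q' ℂ →ₗ[ℂ] Matrix Q Q ℂ) // ∀ m, IsChannel (Rf m)},
    ∑ x, p x * fidelity (∑ m, Rf.1 m (E m (ρ x))) (ρ x)

/-- The corrected average output fidelity of a channel on an ensemble:
`F_av(s,E) = sup over correcting channels R of ∑ₓ p(x) F(R(E(ρₓ)), ρₓ)`. -/
def avgFidChan [Fintype Q] [DecidableEq Q] [Fintype Q'] [Fintype X]
    (p : X → ℝ) (ρ : X → Matrix Q Q ℂ)
    (E : Matrix Q Q ℂ →ₗ[ℂ] Matrix Q' Q' ℂ) : ℝ :=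
  ⨆ Rc : {Rc : Matrix Q' Q' ℂ →ₗ[ℂ] Matrix Q Q ℂ // IsChannel Rc},
    ∑ x, p x * fidelity (Rc.1 (E (ρ x))) (ρ x)

/-- The corrected entanglement fidelity of an instrument w.r.t. a purification `Ψ`:
`F_e(ρ,M) = sup over families of correcting channels {R_m} of
F(∑ₘ (id_R ⊗ R_m ∘ E_m)(Ψ), Ψ)`. -/
def entFid [Fintype Q] [DecidableEq Q] [Fintype Q'] [Fintype R] [DecidableEq R] [Fintype O]
    (Ψ : R × Q → ℂ) (E : O → (Matrix Q Q ℂ →ₗ[ℂ] Matrix Q' Q' ℂ)) : ℝ :=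
  ⨆ Rf : {Rf : O → (Matrix Q' Q' ℂ →ₗ[ℂ] Matrix Q Q ℂ) // ∀ m, IsChannel (Rf m)},
    fidelity (∑ m, idTensor (Rf.1 m ∘ₗ E m) (pureState Ψ)) (pureState Ψ)

/-- A POVM: positive operators summing to the identity. -/
def IsPOVM [Fintype Q] [DecidableEq Q] [Fintype O] (P : O → Matrix Q Q ℂ) : Prop :=
  (∀ m, (P m).PosSemidef) ∧ ∑ m, P m = 1

/-- The classical mutual information `I(X:O)` of the joint distribution
`p(x,m) = p(x) Tr[ρₓ P_m]` generated by measuring the ensemble with the POVM `P`. -/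
def povmMutualInfo [Fintype Q] [Fintype X] [Fintype O]
    (p : X → ℝ) (ρ : X → Matrix Q Q ℂ) (P : O → Matrix Q Q ℂ) : ℝ :=
  ∑ x, ∑ m, p x * (ρ x * P m).trace.re *
    Real.logb 2 ((ρ x * P m).trace.re / (∑ x', p x' * (ρ x' * P m).trace.re))

/-- The accessible information: supremum of the mutual information over all POVMs. -/
def accInfo [Fintype Q] [DecidableEq Q] [Fintype X]
    (p : X → ℝ) (ρ : X → Matrix Q Q ℂ) : ℝ :=
  ⨆ k : ℕ, ⨆ P : {P : Fin k → Matrix Q Q ℂ // IsPOVM P}, povmMutualInfo p ρ P.1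

/-- The minimum overlap `min_{1 ≤ i ≤ N-1} |⟨ψ_{x_i}|ψ_{x_{i+1}}⟩|` along a path
`x : Fin N → X` of signals. -/
def pathMin [Fintype Q] (ψ : X → Q → ℂ) {N : ℕ} (x : Fin N → X) : ℝ :=
  ⨅ i : Fin (N - 1),
    ‖(star (ψ (x (Fin.castLE (Nat.sub_le N 1) i))) ⬝ᵥ
      ψ (x ⟨i.1 + 1, by have := i.isLt; omega⟩))‖

/-- `η(s)`: the supremum over all complete (surjective) paths of the minimum
consecutive overlap divided by the length of the path. -/
def eta [Fintype Q] (ψ : X → Q → ℂ) : ℝ :=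
  ⨆ N : ℕ, ⨆ x : {x : Fin N → X // Function.Surjective x}, pathMin ψ x.1 / N

/-- `ζ(s) = η(s) · minₓ p(x)`; the ensemble is irreducible iff `ζ(s) > 0`. -/
def zeta [Fintype Q] [Fintype X] (p : X → ℝ) (ψ : X → Q → ℂ) : ℝ :=
  eta ψ * ⨅ x, p x

/-- `Tr_R[(φ ⊗ 1_Q)|Ψ⟩⟨Ψ|]` for an operator `φ` on the reference system. -/
def refOp [Fintype R] (φ : Matrix R R ℂ) (Ψ : R × Q → ℂ) : Matrix Q Q ℂ :=
  fun a b => ∑ i, ∑ k, φ i k * Ψ (k, a) * star (Ψ (i, b))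

theorem _root_.Matrix.charpoly_blockDiagonal {n o R : Type*} [Fintype n] [DecidableEq n]
    [Fintype o] [DecidableEq o] [CommRing R] (M : o → Matrix n n R) :
    (blockDiagonal M).charpoly = ∏ k, (M k).charpoly := by
  have : charmatrix (blockDiagonal M) = blockDiagonal fun k => charmatrix (M k) := by
    ext ⟨i, k⟩ ⟨j, k'⟩
    by_cases hk : k = k' <;> by_cases hij : i = j <;> simp [blockDiagonal_apply, hk, hij]
  rw [charpoly, this, det_blockDiagonal]
  rfl

theorem _root_.Matrix.IsHermitian.ofReal_re_trace {n : Type*} [Fintype n] {M : Matrix n n ℂ}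
    (hM : M.IsHermitian) : (M.trace.re : ℂ) = M.trace :=
  Complex.conj_eq_iff_re.mp (by rw [← Complex.star_def, ← trace_conjTranspose, hM.eq])

theorem _root_.Matrix.IsHermitian.sum_comp_eigenvalues_of_charpoly_eq {n ι : Type*} [Fintype n]
    [DecidableEq n] [Fintype ι] {M : Matrix n n ℂ} (hM : M.IsHermitian) {d : ι → ℝ}
    (hd : M.charpoly = ∏ i, (Polynomial.X - Polynomial.C (d i : ℂ))) (f : ℝ → ℝ) :
    ∑ j, f (hM.eigenvalues j) = ∑ i, f (d i) := by
  have hroots : Finset.univ.val.map (RCLike.ofReal ∘ hM.eigenvalues) =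
      Finset.univ.val.map (fun i => (d i : ℂ)) := by
    rw [← hM.roots_charpoly_eq_eigenvalues, hd,
      Polynomial.roots_prod _ _ (by simp [Finset.prod_ne_zero_iff, Polynomial.X_sub_C_ne_zero])]
    simp
  simpa [Multiset.map_map, Function.comp_def] using
    congrArg (fun s => ((s.map Complex.re).map f).sum) hroots

theorem sum_div_mul_eq {ι : Type*} (s : Finset ι) {w : ι → ℝ} (hw : ∀ i ∈ s, 0 ≤ w i)
    (f : ι → ℝ) : (∑ i ∈ s, w i) * ∑ i ∈ s, w i / (∑ j ∈ s, w j) * f i = ∑ i ∈ s, w i * f i := by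
  rcases eq_or_ne (∑ i ∈ s, w i) 0 with h | h
  · rw [h, zero_mul, eq_comm]
    exact Finset.sum_eq_zero fun i hi => by
      rw [(Finset.sum_eq_zero_iff_of_nonneg hw).mp h i hi, zero_mul]
  · rw [Finset.mul_sum]
    exact Finset.sum_congr rfl fun i _ => by field_simp

theorem sum_mul_logb_div_sum {ι : Type*} (s : Finset ι) {p t : ι → ℝ}
    (hp : ∀ i ∈ s, 0 ≤ p i) (ht : ∀ i ∈ s, 0 ≤ t i) (b : ℝ) :
    ∑ i ∈ s, p i * t i * Real.logb b (t i / ∑ j ∈ s, p j * t j) =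
      ∑ i ∈ s, p i * t i * Real.logb b (t i) -
        (∑ i ∈ s, p i * t i) * Real.logb b (∑ i ∈ s, p i * t i) := by
  rw [Finset.sum_mul, ← Finset.sum_sub_distrib]
  refine Finset.sum_congr rfl fun i hi => ?_
  rcases eq_or_ne (p i * t i) 0 with h | h
  · simp [h]
  · have hW : ∑ j ∈ s, p j * t j ≠ 0 :=
      ((mul_nonneg (hp i hi) (ht i hi)).lt_of_ne' h |>.trans_le
        (Finset.single_le_sum (fun j hj => mul_nonneg (hp j hj) (ht j hj)) hi)).ne'
    rw [Real.logb_div (right_ne_zero_of_mul h) hW, mul_sub]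

section

variable {n : Type*} [Fintype n] [DecidableEq n]

theorem entropy_eq_of_charpoly_eq {ι : Type*} [Fintype ι] {A : Matrix n n ℂ}
    (hA : A.IsHermitian) {d : ι → ℝ}
    (hd : A.charpoly = ∏ i, (Polynomial.X - Polynomial.C (d i : ℂ))) :
    entropy A = (∑ i, Real.negMulLog (d i)) / Real.log 2 := by
  rw [entropy, dif_pos hA, hA.sum_comp_eigenvalues_of_charpoly_eq hd]

theorem entropy_real_smul {A : Matrix n n ℂ} (hA : A.IsHermitian) (c : ℝ) :
    entropy (c • A) = c * entropy A + Real.negMulLog c * A.trace.re / Real.log 2 := by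
  have hcA : (c • A).IsHermitian := hA.smul (IsSelfAdjoint.all c)
  have hchar : (c • A).charpoly =
      ∏ i, (Polynomial.X - Polynomial.C ((c * hA.eigenvalues i : ℝ) : ℂ)) := by
    rw [← cfc_const_mul_id c A hA.isSelfAdjoint, hA.charpoly_cfc_eq]
    rfl
  have htrace : A.trace.re = ∑ i, hA.eigenvalues i := by simp [hA.trace_eq_sum_eigenvalues]
  rw [entropy_eq_of_charpoly_eq hcA hchar, entropy, dif_pos hA, htrace]
  simp only [Real.negMulLog_mul, Finset.sum_add_distrib, ← Finset.mul_sum, ← Finset.sum_mul]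
  ring

theorem entropy_zero : entropy (0 : Matrix n n ℂ) = 0 := by
  simpa using entropy_real_smul isHermitian_zero (0 : ℝ)

theorem entropy_blockDiagonal {o : Type*} [Fintype o] [DecidableEq o] {σ : o → Matrix n n ℂ}
    (hσ : ∀ k, (σ k).IsHermitian) :
    entropy (blockDiagonal σ) = ∑ k, entropy (σ k) := by
  have hherm : (blockDiagonal σ).IsHermitian := by
    rw [IsHermitian, blockDiagonal_conjTranspose]
    exact congrArg blockDiagonal (funext fun k => (hσ k).eq)
  have hchar : (blockDiagonal σ).charpoly =
      ∏ p : n × o, (Polynomial.X - Polynomial.C (((hσ p.2).eigenvalues p.1 : ℝ) : ℂ)) := by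
    rw [charpoly_blockDiagonal, Fintype.prod_prod_type_right]
    exact Finset.prod_congr rfl fun k _ => (hσ k).charpoly_eq
  rw [entropy_eq_of_charpoly_eq hherm hchar, Fintype.sum_prod_type_right, Finset.sum_div]
  exact Finset.sum_congr rfl fun k _ => by rw [entropy, dif_pos (hσ k)]

-- Also true for `τ = 0`, thanks to `0⁻¹ = 0`.
theorem trace_re_mul_entropy_inv_smul {τ : Matrix n n ℂ} (hτ : τ.PosSemidef) :
    τ.trace.re * entropy (τ.trace.re⁻¹ • τ) = entropy τ + τ.trace.re * Real.logb 2 τ.trace.re := by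
  set t := τ.trace.re
  rcases eq_or_ne t 0 with ht | ht
  · have htr : τ.trace = 0 := by
      rw [← hτ.1.ofReal_re_trace]
      exact_mod_cast ht
    rw [ht, hτ.trace_eq_zero_iff.mp htr, entropy_zero]
    simp
  · rw [entropy_real_smul hτ.1, Real.negMulLog, Real.log_inv, Real.logb]
    field_simp
    ring

theorem entropyDefect_eq_grouping [Fintype X] {p : X → ℝ} (hp : ∀ x, 0 ≤ p x)
    {τ : X → Matrix n n ℂ} (hτ : ∀ x, (τ x).PosSemidef) :
    entropyDefect p τ =
      (∑ x, p x * (τ x).trace.re) *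
        (entropy ((∑ x, p x * (τ x).trace.re)⁻¹ • ∑ x, (p x : ℂ) • τ x) -
          ∑ x, p x * (τ x).trace.re / (∑ x, p x * (τ x).trace.re) *
            entropy ((τ x).trace.re⁻¹ • τ x)) +
      ∑ x, p x * (τ x).trace.re *
        Real.logb 2 ((τ x).trace.re / ∑ x, p x * (τ x).trace.re) := by
  have hσ : (∑ x, (p x : ℂ) • τ x).PosSemidef :=
    posSemidef_sum _ fun x _ => (hτ x).smul (Complex.zero_le_real.mpr (hp x))
  have htrace : (∑ x, (p x : ℂ) • τ x).trace.re = ∑ x, p x * (τ x).trace.re := by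
    simp [trace_sum, Complex.re_sum]
  have hnormalized := trace_re_mul_entropy_inv_smul hσ
  rw [htrace] at hnormalized
  have ht : ∀ x ∈ Finset.univ, 0 ≤ (τ x).trace.re := fun x _ =>
    Complex.zero_le_real.mp ((hτ x).1.ofReal_re_trace ▸ (hτ x).trace_nonneg)
  rw [mul_sub, hnormalized, sum_div_mul_eq _ fun x hx => mul_nonneg (hp x) (ht x hx),
    sum_mul_logb_div_sum _ (fun x _ => hp x) ht]
  simp only [mul_assoc, trace_re_mul_entropy_inv_smul (hτ _), entropyDefect]
  simp only [mul_add, Finset.sum_add_distrib]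
  ring

theorem entropyDefect_blockDiagonal {o : Type*} [Fintype X] [Fintype o] [DecidableEq o]
    (p : X → ℝ) {σ : X → o → Matrix n n ℂ} (hσ : ∀ x k, (σ x k).IsHermitian) :
    entropyDefect p (fun x => blockDiagonal (σ x)) =
      ∑ k, entropyDefect p (fun x => σ x k) := by
  have hmix : ∑ x, (p x : ℂ) • blockDiagonal (σ x) =
      blockDiagonal fun k => ∑ x, (p x : ℂ) • σ x k := by
    ext ⟨a, k⟩ ⟨b, k'⟩
    by_cases h : k = k' <;> simp [blockDiagonal_apply, Matrix.sum_apply, h]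
  have hmixHerm : ∀ k, (∑ x, (p x : ℂ) • σ x k).IsHermitian := fun k =>
    isSelfAdjoint_sum _ fun x _ => (hσ x k).smul (Complex.conj_ofReal (p x))
  simp only [entropyDefect, hmix, entropy_blockDiagonal hmixHerm, entropy_blockDiagonal (hσ _),
    Finset.sum_sub_distrib, Finset.mul_sum]
  rw [Finset.sum_comm]

end

theorem instrApply_eq_blockDiagonal [DecidableEq O]
    (E : O → (Matrix Q Q ℂ →ₗ[ℂ] Matrix Q' Q' ℂ)) (ρ : Matrix Q Q ℂ) :
    instrApply E ρ = blockDiagonal fun m => E m ρ := by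
  ext ⟨a, m⟩ ⟨b, m'⟩
  by_cases h : m = m' <;> simp [instrApply, blockDiagonal_apply, h]

theorem IsCompletelyPositive.posSemidef_map [Fintype Q] [Fintype Q']
    {Φ : Matrix Q Q ℂ →ₗ[ℂ] Matrix Q' Q' ℂ} (hΦ : IsCompletelyPositive Φ)
    {ρ : Matrix Q Q ℂ} (hρ : ρ.PosSemidef) : (Φ ρ).PosSemidef := by
  have h := hΦ 1 _ (hρ.submatrix (Prod.snd : Fin 1 × Q → Q))
  exact h.submatrix fun a : Q' => ((0 : Fin 1), a)

theorem IsInstrument.sum_trace_re_map [Fintype Q] [Fintype Q'] [Fintype O]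
    {E : O → (Matrix Q Q ℂ →ₗ[ℂ] Matrix Q' Q' ℂ)} (hE : IsInstrument E) (ρ : Matrix Q Q ℂ) :
    ∑ m, (E m ρ).trace.re = ρ.trace.re := by
  rw [← Complex.re_sum, ← trace_sum, hE.2]

/-- The entropy defect loss of the channelized instrument equals
`Δχ(s,M) = ∑ₘ p(m)[χ(s) - χ(s̄ₘ)] - I(X:𝒳)`. -/
theorem defectLoss_decomposition
    {Q Q' O X : Type*} [Fintype Q] [DecidableEq Q] [Fintype Q'] [DecidableEq Q']
    [Fintype O] [DecidableEq O] [Fintype X]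
    (E : O → (Matrix Q Q ℂ →ₗ[ℂ] Matrix Q' Q' ℂ)) (hE : IsInstrument E)
    (p : X → ℝ) (ρ : X → Matrix Q Q ℂ)
    (hp : ∀ x, 0 < p x) (hp1 : (∑ x, p x) = 1) (hρ : ∀ x, IsDensity (ρ x))
    (pmx : X → O → ℝ) (hpmx : ∀ x m, pmx x m = (E m (ρ x)).trace.re)
    (pm : O → ℝ) (hpm : ∀ m, pm m = ∑ x, p x * pmx x m)
    (Iinfo : ℝ)
    (hI : Iinfo = ∑ x, ∑ m, p x * pmx x m * Real.logb 2 (pmx x m / pm m))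
    (chiBar : O → ℝ)
    (hchi : ∀ m, chiBar m =
      entropy (((pm m)⁻¹ : ℝ) • E m (∑ x, (p x : ℂ) • ρ x)) -
        ∑ x, (p x * pmx x m / pm m) * entropy (((pmx x m)⁻¹ : ℝ) • E m (ρ x))) :
    entropyDefect p ρ - entropyDefect p (fun x => instrApply E (ρ x)) =
      (∑ m, pm m * (entropyDefect p ρ - chiBar m)) - Iinfo := by
  have hτ : ∀ x m, (E m (ρ x)).PosSemidef := fun x m => (hE.1 m).posSemidef_map (hρ x).1
  have hmix : ∀ m, E m (∑ x, (p x : ℂ) • ρ x) = ∑ x, (p x : ℂ) • E m (ρ x) := fun m => by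
    simp only [map_sum, map_smul]
  have hpm_sum : ∑ m, ∑ x, p x * (E m (ρ x)).trace.re = 1 := by
    rw [Finset.sum_comm]
    simp only [← Finset.mul_sum, hE.sum_trace_re_map, (hρ _).2, Complex.one_re, mul_one, hp1]
  rw [Finset.sum_comm] at hI
  simp only [instrApply_eq_blockDiagonal, hchi, hI, hpm, hpmx, hmix]
  rw [entropyDefect_blockDiagonal p fun x m => (hτ x m).1]
  simp only [entropyDefect_eq_grouping (fun x => (hp x).le) (fun x => hτ x _)]
  simp only [mul_sub, Finset.sum_sub_distrib, Finset.sum_add_distrib, ← Finset.sum_mul, hpm_sum]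
  ring

end QID
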